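/- arXiv:1807.02823 — 9 statements merged into one kernel-verified Lean document; each statement's English description precedes it below -/
import Mathlib

section
/- Let g ≥ 1 and let f ∈ ℤ[X] be a monic polynomial of odd degree 2g+1. For every field K, writing f̄ ∈ K[X] for the image of f under the canonical map ℤ[X] → K[X], the ring K[X,Y]/(Y² − f̄) is an integral domain. (In particular all fibers of the Weierstrass model y² = f(x) over Spec ℤ are geometrically integral curves.) -/
/-!
The image `f̄` of `f` in `K[X]` is monic of odd degree, so it is not a square in `K[X]`. As `K[X]`
is integrally closed, a square root of `f̄` in its fraction field would already lie in `K[X]`, so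
`Y² - f̄` is irreducible over `K(X)` and hence, being monic, over `K[X]`. In the factorial ring
`K[X][Y]` it is then prime, and the quotient is a domain.
-/

open Polynomial

namespace Polynomial

theorem not_isSquare_of_odd_natDegree {R : Type*} [Semiring R] [NoZeroDivisors R] {p : R[X]}
    (hp : Odd p.natDegree) : ¬IsSquare p := by
  rintro ⟨q, rfl⟩
  rcases eq_or_ne q 0 with rfl | hq
  · simp at hp
  · rw [natDegree_mul hq hq] at hp
    exact Nat.not_odd_iff_even.mpr ⟨_, rfl⟩ hp

theorem irreducible_X_pow_two_sub_C {R : Type*} [CommRing R] [IsDomain R] [IsIntegrallyClosed R]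
    {a : R} (ha : ¬IsSquare a) : Irreducible (X ^ 2 - C a : R[X]) := by
  rw [(monic_X_pow_sub_C a two_ne_zero).irreducible_iff_irreducible_map_fraction_map
      (K := FractionRing R), Polynomial.map_sub, Polynomial.map_pow, map_X, map_C,
    X_pow_sub_C_irreducible_iff_of_prime Nat.prime_two]
  intro b hb
  obtain ⟨c, rfl⟩ := IsIntegrallyClosed.exists_algebraMap_eq_of_isIntegral_pow two_pos
    (hb ▸ isIntegral_algebraMap)
  exact ha ⟨c, IsFractionRing.injective R (FractionRing R) (by rw [← hb, map_mul, sq])⟩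

end Polynomial

theorem fibers_are_integral_general (g : ℕ) (f : ℤ[X]) (hmonic : f.Monic)
    (hdeg : f.natDegree = 2 * g + 1) (K : Type) [Field K] :
    IsDomain (AdjoinRoot ((X : (K[X])[X]) ^ 2 - C (f.map (Int.castRingHom K)))) := by
  have hodd : Odd (f.map (Int.castRingHom K)).natDegree := by
    rw [hmonic.natDegree_map, hdeg]
    exact odd_two_mul_add_one g
  exact AdjoinRoot.isDomain_of_prime
    (irreducible_X_pow_two_sub_C (not_isSquare_of_odd_natDegree hodd)).prime

/-- If `f ∈ ℤ[X]` is monic of odd degree `2g+1`, `g ≥ 1`, then for every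
field `K` the ring `K[X,Y]/(Y² - f̄)` is an integral domain, where `f̄` is the image of `f`
in `K[X]`. -/
theorem fibers_are_integral (g : ℕ) (hg : 1 ≤ g) (f : ℤ[X]) (hmonic : f.Monic)
    (hdeg : f.natDegree = 2 * g + 1) (K : Type) [Field K] :
    IsDomain (AdjoinRoot ((X : (K[X])[X]) ^ 2 - C (f.map (Int.castRingHom K)))) :=
  fibers_are_integral_general g f hmonic hdeg K
end

section
/- Let g ≥ 1 and let f ∈ ℤ[X] be a square-free monic polynomial of degree 2g+1. Then the ring R = ℤ[X,Y]/(Y² − f) is an integrally closed integral domain (i.e. the affine Weierstrass model W : y² = f(x) over Spec ℤ is normal); in particular R is regular in codimension 1. -/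
open Polynomial

noncomputable section

/-!
Put `A = ℤ[X]` and `K = Frac A`. As `f` has odd degree it is not a square, so
`R ≅ A[√f]` embeds into the field `L = K(√f)`, and it suffices to show that every
`x = c₀ + c₁√f ∈ L` integral over `A` lies in `R`. Its trace `T = 2c₀` and norm
`N = c₀² - c₁²f` are integral over `A`, hence lie in `A`; then `(2c₁)²f = T² - 4N`, and
squarefreeness of `f` gives `B = 2c₁ ∈ A`. Finally `T² - B²f = 4N` reduces modulo 2 to
`T̄² = B̄²f̄` in `𝔽₂[X]` with `f̄` of odd degree, which forces `T̄ = B̄ = 0`, i.e. `c₀, c₁ ∈ A`.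
-/

namespace Polynomial

theorem Monic.squarefree_of_squarefree_map {R S : Type*} [CommRing R] [CommRing S] [IsDomain S]
    {f : R[X]} (hf : f.Monic) {φ : R →+* S} (hφ : Function.Injective φ)
    (h : Squarefree (f.map φ)) : Squarefree f := by
  intro a ha
  have hunit : IsUnit (a.map φ) := h _ (by simpa only [Polynomial.map_mul] using map_dvd φ ha)
  obtain ⟨r, rfl⟩ : ∃ r, a = C r := ⟨a.coeff 0, eq_C_of_natDegree_eq_zero <| by
    simpa [natDegree_map_eq_of_injective hφ] using natDegree_eq_zero_of_isUnit hunit⟩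
  have hrr : r * r ∣ 1 := by
    simpa [hf.coeff_natDegree] using
      (C_dvd_iff_dvd_coeff (r * r) f).mp (by rwa [C_mul]) f.natDegree
  exact isUnit_C.mpr (isUnit_of_dvd_one (dvd_of_mul_right_dvd hrr))

theorem eq_zero_of_sq_eq_sq_mul_of_odd_natDegree {R : Type*} [CommRing R] [IsDomain R]
    {f T B : R[X]} (hf : Odd f.natDegree) (h : T ^ 2 = B ^ 2 * f) : B = 0 := by
  by_contra hB
  have hf0 : f ≠ 0 := by rintro rfl; simp at hf
  have hdeg := congrArg natDegree h
  rw [natDegree_pow, natDegree_mul (pow_ne_zero 2 hB) hf0, natDegree_pow] at hdeg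
  obtain ⟨k, hk⟩ := hf
  omega

theorem not_isSquare_of_odd_natDegree_s3 {R : Type*} [CommRing R] [IsDomain R] {f : R[X]}
    (hf : Odd f.natDegree) : ¬IsSquare f := by
  rintro ⟨r, rfl⟩
  exact one_ne_zero (eq_zero_of_sq_eq_sq_mul_of_odd_natDegree (T := r) (B := 1) hf (by ring))

theorem natCast_dvd_of_map_zmod_eq_zero {n : ℕ} {P : ℤ[X]}
    (h : P.map (Int.castRingHom (ZMod n)) = 0) : (n : ℤ[X]) ∣ P := by
  rw [← map_natCast C, C_dvd_iff_dvd_coeff]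
  intro i
  exact (ZMod.intCast_zmod_eq_zero_iff_dvd _ n).mp (by simpa using congrArg (coeff · i) h)

theorem two_dvd_of_four_dvd_sq_sub_sq_mul {f T B : ℤ[X]} (hf : f.Monic) (hodd : Odd f.natDegree)
    (h : 4 ∣ T ^ 2 - B ^ 2 * f) : 2 ∣ T ∧ 2 ∣ B := by
  let π := mapRingHom (Int.castRingHom (ZMod 2))
  have hπ4 : π 4 = 0 := by
    rw [map_ofNat]; exact CharP.ofNat_eq_zero' _ 2 4 (by norm_num)
  have hmod : π T ^ 2 = π B ^ 2 * π f := by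
    obtain ⟨N, hN⟩ := h
    simpa [sub_eq_zero, hπ4] using congrArg π hN
  have hB := eq_zero_of_sq_eq_sq_mul_of_odd_natDegree
    (by rwa [coe_mapRingHom, hf.natDegree_map]) hmod
  have hT : π T = 0 := pow_eq_zero_iff two_ne_zero |>.mp (by simpa [hB] using hmod)
  exact ⟨by exact_mod_cast natCast_dvd_of_map_zmod_eq_zero (n := 2) hT,
    by exact_mod_cast natCast_dvd_of_map_zmod_eq_zero (n := 2) hB⟩

end Polynomial

namespace QuadraticAlgebra

variable {R : Type*} [CommRing R] {a b : R}

def starAlgHom : QuadraticAlgebra R a b →ₐ[R] QuadraticAlgebra R a b :=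
  { starRingEnd _ with commutes' := fun r => by ext <;> simp [starRingEnd_apply] }

theorem isIntegral_star {A : Type*} [CommRing A] [Algebra A R] {x : QuadraticAlgebra R a b}
    (hx : IsIntegral A x) : IsIntegral A (star x) :=
  hx.map (starAlgHom.restrictScalars A)

variable {S : Type*} [CommRing S] [Algebra R S]

variable (S) in
def mapAlgHom (a : R) : QuadraticAlgebra R a 0 →ₐ[R] QuadraticAlgebra S (algebraMap R S a) 0 :=
  lift ⟨ω, by ext <;> simp [Algebra.algebraMap_eq_smul_one]⟩

@[simp]
theorem re_mapAlgHom (z : QuadraticAlgebra R a 0) :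
    (mapAlgHom S a z).re = algebraMap R S z.re := by
  simp [mapAlgHom, Algebra.smul_def, IsScalarTower.algebraMap_apply R S (QuadraticAlgebra S _ _)]

@[simp]
theorem im_mapAlgHom (z : QuadraticAlgebra R a 0) :
    (mapAlgHom S a z).im = algebraMap R S z.im := by
  simp [mapAlgHom, Algebra.smul_def, IsScalarTower.algebraMap_apply R S (QuadraticAlgebra S _ _)]

theorem mapAlgHom_injective (h : Function.Injective (algebraMap R S)) :
    Function.Injective (mapAlgHom S a) := fun z w hzw => by
  ext
  · exact h (by simpa using congrArg re hzw)
  · exact h (by simpa using congrArg im hzw)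

variable (R) in
def adjoinRootEquiv (a : R) : AdjoinRoot (X ^ 2 - C a : R[X]) ≃ₐ[R] QuadraticAlgebra R a 0 :=
  AlgEquiv.ofAlgHom
    (AdjoinRoot.liftAlgHom _ (Algebra.ofId R _) ω (by simp [sq, omega_mul_omega_eq_algebraMap]))
    (lift ⟨AdjoinRoot.root _, by
      have h := AdjoinRoot.eval₂_root (X ^ 2 - C a)
      rw [eval₂_sub, eval₂_X_pow, eval₂_C, sub_eq_zero] at h
      simp [← sq, h, Algebra.smul_def]⟩)
    (algHom_ext (by simp))
    (AdjoinRoot.algHom_ext (by simp))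

end QuadraticAlgebra

namespace IsIntegrallyClosed

variable {A K : Type*} [CommRing A] [IsIntegrallyClosed A] [Field K] [Algebra A K]
  [IsFractionRing A K]

theorem isSquare_algebraMap_iff {x : A} :
    IsSquare (algebraMap A K x) ↔ IsSquare x := by
  refine ⟨fun ⟨r, hr⟩ => ?_, IsSquare.map _⟩
  obtain ⟨s, rfl⟩ := exists_algebraMap_eq_of_isIntegral_pow (R := A) (K := K) two_pos
    (by rw [sq, ← hr]; exact isIntegral_algebraMap)
  exact ⟨s, IsFractionRing.injective A K (by rw [hr, map_mul])⟩

theorem exists_algebraMap_eq_of_sq_mul [IsDomain A] [DecompositionMonoid A] {d m : A}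
    (hd : Squarefree d) {c : K} (h : c ^ 2 * algebraMap A K d = algebraMap A K m) :
    ∃ b : A, algebraMap A K b = c := by
  have hφ := IsFractionRing.injective A K
  obtain ⟨w, hw⟩ := exists_algebraMap_eq_of_isIntegral_pow (R := A)
    (x := c * algebraMap A K d) two_pos
    (by rw [mul_pow, sq (algebraMap A K d), ← mul_assoc, h, ← map_mul]; exact isIntegral_algebraMap)
  have hw2 : w ^ 2 = m * d := hφ (by rw [map_pow, hw, map_mul, ← h]; ring)
  obtain ⟨b, rfl⟩ := (hd.dvd_pow_iff_dvd two_ne_zero).mp ⟨m, by rw [hw2, mul_comm]⟩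
  refine ⟨b, mul_left_cancel₀ ((map_ne_zero_iff _ hφ).mpr hd.ne_zero) ?_⟩
  rw [← map_mul, hw, mul_comm]

end IsIntegrallyClosed

namespace QuadraticAlgebra

section IntegralElements

variable {A K : Type*} [CommRing A] [IsDomain A] [DecompositionMonoid A] [IsIntegrallyClosed A]
  [Field K] [Algebra A K] [IsFractionRing A K] {d : A}

theorem exists_two_mul_eq_of_isIntegral
    (hd : Squarefree d) {x : QuadraticAlgebra K (algebraMap A K d) 0} (hx : IsIntegral A x) :
    ∃ T B : A, algebraMap A K T = 2 * x.re ∧ algebraMap A K B = 2 * x.im ∧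
      4 ∣ T ^ 2 - B ^ 2 * d := by
  have hKL := algebraMap_injective (R := K) (a := algebraMap A K d) (b := 0)
  obtain ⟨T, hT⟩ := IsIntegrallyClosed.exists_algebraMap_eq_of_isIntegral_pow (R := A)
    (x := trace x) one_pos
    (by rw [pow_one, ← isIntegral_algebraMap_iff hKL, algebraMap_trace_eq_add_star]
        exact hx.add (isIntegral_star hx))
  obtain ⟨N, hN⟩ := IsIntegrallyClosed.exists_algebraMap_eq_of_isIntegral_pow (R := A)
    (x := norm x) one_pos
    (by rw [pow_one, ← isIntegral_algebraMap_iff hKL, algebraMap_norm_eq_mul_star]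
        exact hx.mul (isIntegral_star hx))
  rw [trace_def, zero_mul, add_zero] at hT
  rw [norm_def, zero_mul, zero_mul, add_zero] at hN
  obtain ⟨B, hB⟩ := IsIntegrallyClosed.exists_algebraMap_eq_of_sq_mul hd (c := 2 * x.im)
    (m := T ^ 2 - 4 * N) (by simp only [map_sub, map_pow, map_mul, hT, hN, map_ofNat]; ring)
  refine ⟨T, B, hT, hB, N, IsFractionRing.injective A K ?_⟩
  simp only [map_sub, map_pow, map_mul, hT, hN, hB, map_ofNat]
  ring

theorem exists_mapAlgHom_eq_of_isIntegral (hd : Squarefree d) (h2 : (2 : A) ≠ 0)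
    (hpar : ∀ T B : A, 4 ∣ T ^ 2 - B ^ 2 * d → 2 ∣ T ∧ 2 ∣ B)
    {x : QuadraticAlgebra K (algebraMap A K d) 0} (hx : IsIntegral A x) :
    ∃ y, mapAlgHom K d y = x := by
  obtain ⟨T, B, hT, hB, hdvd⟩ := exists_two_mul_eq_of_isIntegral hd hx
  obtain ⟨⟨x₀, rfl⟩, ⟨x₁, rfl⟩⟩ := hpar T B hdvd
  have h2K : (2 : K) ≠ 0 := by
    rw [← map_ofNat (algebraMap A K) 2]
    exact (map_ne_zero_iff _ (IsFractionRing.injective A K)).mpr h2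
  rw [map_mul, map_ofNat] at hT hB
  exact ⟨⟨x₀, x₁⟩, QuadraticAlgebra.ext (by simpa using mul_left_cancel₀ h2K hT)
    (by simpa using mul_left_cancel₀ h2K hB)⟩

end IntegralElements

theorem isDomain_and_isIntegrallyClosed {A : Type*} [CommRing A] [IsDomain A]
    [DecompositionMonoid A] [IsIntegrallyClosed A] {d : A} (hsq : ¬IsSquare d) (hd : Squarefree d)
    (h2 : (2 : A) ≠ 0) (hpar : ∀ T B : A, 4 ∣ T ^ 2 - B ^ 2 * d → 2 ∣ T ∧ 2 ∣ B) :
    IsDomain (QuadraticAlgebra A d 0) ∧ IsIntegrallyClosed (QuadraticAlgebra A d 0) := by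
  let K := FractionRing A
  let L := QuadraticAlgebra K (algebraMap A K d) 0
  have : Fact (∀ r : K, r ^ 2 ≠ algebraMap A K d + 0 * r) := ⟨fun r hr =>
    hsq (IsIntegrallyClosed.isSquare_algebraMap_iff.mp ⟨r, by rw [← sq, hr, zero_mul, add_zero]⟩)⟩
  have hinj := mapAlgHom_injective (a := d) (IsFractionRing.injective A K)
  let : Algebra (QuadraticAlgebra A d 0) L := (mapAlgHom K d).toAlgebra
  have : IsScalarTower A (QuadraticAlgebra A d 0) L := IsScalarTower.of_algHom (mapAlgHom K d)
  have : FaithfulSMul (QuadraticAlgebra A d 0) L :=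
    (faithfulSMul_iff_algebraMap_injective _ _).mpr hinj
  have : IsIntegralClosure (QuadraticAlgebra A d 0) A L :=
    ⟨hinj, ⟨exists_mapAlgHom_eq_of_isIntegral hd h2 hpar, by
      rintro ⟨y, rfl⟩; exact (Algebra.IsIntegral.isIntegral y).map (mapAlgHom K d)⟩⟩
  have := IsIntegrallyClosedIn.of_isIntegralClosure A (A := QuadraticAlgebra A d 0) (B := L)
  exact ⟨hinj.isDomain (mapAlgHom K d), IsIntegrallyClosed.of_isIntegrallyClosedIn _ L⟩

end QuadraticAlgebra

theorem weierstrass_model_normal_general (g : ℕ) (f : ℤ[X]) (hmonic : f.Monic)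
    (hdeg : f.natDegree = 2 * g + 1)
    (hsf : Squarefree (f.map (Int.castRingHom ℚ))) :
    IsDomain (AdjoinRoot ((X : (ℤ[X])[X]) ^ 2 - C f)) ∧
      IsIntegrallyClosed (AdjoinRoot ((X : (ℤ[X])[X]) ^ 2 - C f)) := by
  have hodd : Odd f.natDegree := ⟨g, hdeg⟩
  obtain ⟨_, _⟩ := QuadraticAlgebra.isDomain_and_isIntegrallyClosed
    (not_isSquare_of_odd_natDegree_s3 hodd)
    (hmonic.squarefree_of_squarefree_map (RingHom.injective_int _) hsf) two_ne_zero
    (fun _ _ => two_dvd_of_four_dvd_sq_sub_sq_mul hmonic hodd)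
  let e := QuadraticAlgebra.adjoinRootEquiv ℤ[X] f
  exact ⟨e.injective.isDomain e, IsIntegrallyClosed.of_equiv e.symm.toRingEquiv⟩

/-- If `f ∈ ℤ[X]` is a square-free monic polynomial of degree `2g+1`,
`g ≥ 1`, then `R = ℤ[X,Y]/(Y² - f)` is an integrally closed integral domain, i.e. the
affine Weierstrass model `W : y² = f(x)` over `Spec ℤ` is normal. -/
theorem weierstrass_model_normal (g : ℕ) (hg : 1 ≤ g) (f : ℤ[X]) (hmonic : f.Monic)
    (hdeg : f.natDegree = 2 * g + 1)
    (hsf : Squarefree (f.map (Int.castRingHom ℚ))) :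
    IsDomain (AdjoinRoot ((X : (ℤ[X])[X]) ^ 2 - C f)) ∧
      IsIntegrallyClosed (AdjoinRoot ((X : (ℤ[X])[X]) ^ 2 - C f)) :=
  weierstrass_model_normal_general g f hmonic hdeg hsf
end
end

section
/- Let R be a discrete valuation ring with fraction field K and perfect residue field k, and let f ∈ R[X]. Write f̃ ∈ k[X] for the reduction of f. Assume the generic fiber is normal, i.e. K[X,Y]/(Y² − f) is an integrally closed integral domain. Then: (a) if k[X,Y]/(Y² − f̃) is reduced, then R[X,Y]/(Y² − f) is an integrally closed integral domain; (b) k[X,Y]/(Y² − f̃) is not reduced if and only if 4f̃ = 0 in k[X] and −f̃ is a square in k[X]. -/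
/-! Since `Y² - f` is monic, `B = R[X][Y]/(Y² - f)` embeds into its generic fibre
`K[X][Y]/(Y² - f) = B[1/π]`, which is a normal domain, and its special fibre `B/πB` is
`k[X][Y]/(Y² - f̃)`. An element of `Frac B` integral over `B` therefore lies in `B[1/π]`, say
`x = b/πⁿ`. If `n > 0`, the integral equation of `x` gives `bᵐ ∈ πB`, so `b ∈ πB` because
`B/πB` is reduced, and `n` drops.

For (b), `k[X][Y]/(Y² - f̃)` is reduced iff `Y² - f̃` is squarefree in the UFD `k[X][Y]`, and over
a domain `Y² - a` fails to be squarefree iff it equals `(Y + t)²` with `2t = 0`, i.e. iff `4a = 0`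
and `-a` is a square. -/

open Polynomial

theorem Polynomial.monic_X_sq_sub_C {A : Type*} [CommRing A] (a : A) :
    ((X : A[X]) ^ 2 - C a).Monic :=
  monic_X_pow_sub_C a two_ne_zero

theorem Polynomial.map_X_sq_sub_C {A A' : Type*} [CommRing A] [CommRing A'] (u : A →+* A')
    (a : A) : ((X : A[X]) ^ 2 - C a).map u = X ^ 2 - C (u a) := by
  simp

theorem Polynomial.X_sq_sub_C_eq_mul_self_mul_C_iff {A : Type*} [CommRing A] (a s t w : A) :
    (X : A[X]) ^ 2 - C a = (C s * X + C t) * (C s * X + C t) * C w ↔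
      s * s * w = 1 ∧ 2 * s * t * w = 0 ∧ t * t * w = -a := by
  have hexpand : (C s * X + C t) * (C s * X + C t) * C w
      = C (s * s * w) * X ^ 2 + C (2 * s * t * w) * X + C (t * t * w) := by
    simp only [map_mul, map_ofNat]
    ring
  rw [hexpand, Polynomial.ext_iff]
  refine ⟨fun h => ⟨?_, ?_, ?_⟩, fun ⟨h2, h1, h0⟩ n => ?_⟩
  · simpa [coeff_X, coeff_C, -map_mul] using (h 2).symm
  · simpa [coeff_X, coeff_C, -map_mul] using (h 1).symm
  · simpa [coeff_X, coeff_C, -map_mul] using (h 0).symm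
  · rcases n with _ | _ | _ | n <;> simp [coeff_C, h2, h1, h0, -map_mul]

theorem Polynomial.not_squarefree_X_sq_sub_C_iff {A : Type*} [CommRing A] [IsDomain A] (a : A) :
    ¬ Squarefree ((X : A[X]) ^ 2 - C a) ↔ 4 * a = 0 ∧ IsSquare (-a) := by
  constructor
  · intro h
    simp only [Squarefree, not_forall] at h
    obtain ⟨x, ⟨q, hq⟩, hx⟩ := h
    have hmonic := monic_X_sq_sub_C a
    have hx0 : x ≠ 0 := by rintro rfl; exact hmonic.ne_zero (by simpa using hq)
    have hq0 : q ≠ 0 := by rintro rfl; exact hmonic.ne_zero (by simpa using hq)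
    have hdeg : x.natDegree + x.natDegree + q.natDegree = 2 := by
      rw [← natDegree_X_pow_sub_C (n := 2) (r := a), hq, natDegree_mul (mul_ne_zero hx0 hx0) hq0,
        natDegree_mul hx0 hx0]
    have hx1 : x.natDegree = 1 := by
      refine le_antisymm (by omega) (Nat.one_le_iff_ne_zero.mpr fun h0 => hx ?_)
      rw [eq_C_of_natDegree_eq_zero h0, isUnit_C, ← h0]
      exact hmonic.isUnit_leadingCoeff_of_dvd ⟨x * q, by rw [hq]; ring⟩
    rw [eq_X_add_C_of_natDegree_le_one hx1.le,
      eq_C_of_natDegree_eq_zero (by omega : q.natDegree = 0),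
      X_sq_sub_C_eq_mul_self_mul_C_iff] at hq
    obtain ⟨h2, h1, h0⟩ := hq
    set s := x.coeff 1
    set t := x.coeff 0
    set w := q.coeff 0
    have ht : 2 * t = 0 := by linear_combination s * h1 - 2 * t * h2
    exact ⟨by linear_combination 4 * h0 - 2 * t * w * ht,
      s * t * w, by linear_combination -h0 - t * t * w * h2⟩
  · rintro ⟨h4, t, ht⟩
    have h2 : 2 * t = 0 := mul_self_eq_zero.mp (by linear_combination -h4 - 4 * ht)
    have hsq : (X : A[X]) ^ 2 - C a = (C 1 * X + C t) * (C 1 * X + C t) * C 1 :=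
      (X_sq_sub_C_eq_mul_self_mul_C_iff a 1 t 1).mpr
        ⟨by ring, by linear_combination h2, by linear_combination -ht⟩
    intro hsf
    have := natDegree_eq_zero_of_isUnit (hsf _ ⟨_, hsq⟩)
    rw [C_1, one_mul, natDegree_X_add_C] at this
    exact one_ne_zero this

namespace AdjoinRoot

theorem isReduced_iff_squarefree {A : Type*} [CommRing A] [IsDomain A]
    [DecompositionMonoid A[X]] {g : A[X]} (hg : g ≠ 0) :
    IsReduced (AdjoinRoot g) ↔ Squarefree g := by
  rw [← isRadical_iff_squarefree_of_ne_zero hg, isRadical_iff_span_singleton,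
    Ideal.isRadical_iff_quotient_reduced]
  rfl

section Map

variable {A A' : Type*} [CommRing A] [CommRing A'] (u : A →+* A') {g : A[X]}

theorem map_mk (q : A'[X]) (h : q ∣ g.map u) (p : A[X]) :
    map u g q h (mk g p) = mk q (p.map u) := by
  rw [map, lift_mk, ← aeval_eq, aeval_def, eval₂_map]
  rfl

theorem ker_map_of_monic [Nontrivial A'] (hg : g.Monic) :
    RingHom.ker (map u g (g.map u) dvd_rfl) = (RingHom.ker u).map (of g) := by
  have := u.domain_nontrivial
  refine le_antisymm (fun b hb => ?_) (Ideal.map_le_iff_le_comap.mpr fun a ha => ?_)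
  · obtain ⟨p, rfl⟩ := mk_surjective b
    rw [RingHom.mem_ker, ← mk_leftInverse hg (mk g p), modByMonicHom_mk, map_mk, mk_eq_zero] at hb
    rw [← mk_leftInverse hg (mk g p), modByMonicHom_mk]
    have hr : (p %ₘ g).map u = 0 := by
      by_contra hr
      refine (hg.map u).not_dvd_of_degree_lt hr ?_ hb
      calc ((p %ₘ g).map u).degree ≤ (p %ₘ g).degree := degree_map_le
        _ < g.degree := degree_modByMonic_lt p hg
        _ = (g.map u).degree := (hg.degree_map u).symm
    have hC : p %ₘ g ∈ (RingHom.ker u).map C := by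
      rw [← ker_mapRingHom]
      exact hr
    have := Ideal.mem_map_of_mem (mk g) hC
    rw [Ideal.map_map] at this
    exact this
  · simp_all [RingHom.mem_ker]

theorem map_injective_of_monic [Nontrivial A'] (hg : g.Monic) (hu : Function.Injective u) :
    Function.Injective (map u g (g.map u) dvd_rfl) := by
  rw [RingHom.injective_iff_ker_eq_bot, ker_map_of_monic u hg,
    (RingHom.injective_iff_ker_eq_bot u).mp hu, Ideal.map_bot]

theorem isLocalization_map [Nontrivial A'] [Algebra A A'] (M : Submonoid A)
    [IsLocalization M A'] (hM : M ≤ nonZeroDivisors A) (hg : g.Monic) :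
    letI := (map (algebraMap A A') g (g.map (algebraMap A A')) dvd_rfl).toAlgebra
    IsLocalization (M.map (of g)) (AdjoinRoot (g.map (algebraMap A A'))) := by
  let := (map (algebraMap A A') g (g.map (algebraMap A A')) dvd_rfl).toAlgebra
  refine ⟨?_, fun z => ?_, fun h => ⟨1, ?_⟩⟩
  · rintro ⟨_, m, hm, rfl⟩
    simpa [RingHom.algebraMap_toAlgebra] using (IsLocalization.map_units A' ⟨m, hm⟩).map (of _)
  · obtain ⟨p, rfl⟩ := mk_surjective z
    obtain ⟨m, hm, hp⟩ := IsLocalization.integerNormalization_spec M p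
    refine ⟨⟨mk g (IsLocalization.integerNormalization M p), ⟨of g m, m, hm, rfl⟩⟩, ?_⟩
    simp [RingHom.algebraMap_toAlgebra, map_mk, hp, Algebra.smul_def, mul_comm]
  · rw [map_injective_of_monic _ hg (IsLocalization.injective A' hM) h]

end Map

theorem ker_map_residue_of_monic {R : Type*} [CommRing R] [IsLocalRing R] {π : R}
    (hπ : IsLocalRing.maximalIdeal R = Ideal.span {π}) {g : R[X][X]} (hg : g.Monic) :
    RingHom.ker (map (mapRingHom (IsLocalRing.residue R)) g _ dvd_rfl) =
      Ideal.span {of g (C π)} := by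
  rw [ker_map_of_monic _ hg, ker_mapRingHom, IsLocalRing.ker_residue, hπ, Ideal.map_span,
    Set.image_singleton, Ideal.map_span, Set.image_singleton]

end AdjoinRoot

section IntegralElements

variable {A K : Type*} [CommRing A] [IsDomain A] [Field K] [Algebra A K] [IsFractionRing A K]
  {π : A}

theorem IsIntegral.exists_algebraMap_eq_of_mul_eq (hπ : π ≠ 0) (hrad : IsRadical π) {x : K}
    (hx : IsIntegral A x) {b : A} (hb : x * algebraMap A K π = algebraMap A K b) :
    ∃ a, algebraMap A K a = x := by
  obtain ⟨P, hP, hPx⟩ := hx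
  obtain ⟨a, rfl⟩ := hrad _ _ (dvd_pow_natDegree_of_aeval_eq_zero hP π b x hPx hb)
  refine ⟨a, mul_right_cancel₀ (IsFractionRing.to_map_ne_zero_of_mem_nonZeroDivisors
    (mem_nonZeroDivisors_of_ne_zero hπ)) ?_⟩
  rw [hb, map_mul, mul_comm]

theorem IsIntegral.exists_algebraMap_eq_of_mul_pow_eq (hπ : π ≠ 0) (hrad : IsRadical π)
    {x : K} (hx : IsIntegral A x) {n : ℕ} {b : A}
    (hb : x * algebraMap A K (π ^ n) = algebraMap A K b) : ∃ a, algebraMap A K a = x := by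
  induction n generalizing x with
  | zero => exact ⟨b, by simpa using hb.symm⟩
  | succ n ih =>
    rw [pow_succ', map_mul, ← mul_assoc] at hb
    obtain ⟨a, ha⟩ := ih (hx.mul isIntegral_algebraMap) hb
    exact hx.exists_algebraMap_eq_of_mul_eq hπ hrad ha.symm

end IntegralElements

theorem IsIntegrallyClosed.of_isLocalization_away {A L : Type*} [CommRing A] [IsDomain A]
    [CommRing L] [Algebra A L] {π : A} (hπ : π ≠ 0) (hrad : IsRadical π)
    [IsLocalization.Away π L] [IsIntegrallyClosed L] : IsIntegrallyClosed A := by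
  let K := FractionRing A
  have hle := powers_le_nonZeroDivisors_of_noZeroDivisors hπ
  let : Algebra L K := IsLocalization.localizationAlgebraOfSubmonoidLe L K _ _ hle
  have := IsLocalization.localization_isScalarTower_of_submonoid_le L K _ _ hle
  have : IsFractionRing L K :=
    IsFractionRing.isFractionRing_of_isDomain_of_isLocalization (Submonoid.powers π) L K
  refine (isIntegrallyClosed_iff K).mpr fun {x} hx => ?_
  obtain ⟨z, rfl⟩ := IsIntegrallyClosed.isIntegral_iff.mp (hx.tower_top (A := L))
  obtain ⟨⟨b, _, n, rfl⟩, hz⟩ := IsLocalization.surj (Submonoid.powers π) z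
  refine hx.exists_algebraMap_eq_of_mul_pow_eq hπ hrad (n := n) (b := b) ?_
  simpa [IsScalarTower.algebraMap_apply A L K] using congr(algebraMap L K $hz)

theorem IsDiscreteValuationRing.isLocalization_away {R K : Type*} [CommRing R] [IsDomain R]
    [IsDiscreteValuationRing R] [CommRing K] [Algebra R K] [IsFractionRing R K] {π : R}
    (hπ : Irreducible π) : IsLocalization.Away π K := by
  refine (IsLocalization.iff_of_le_of_exists_dvd _ _
    (powers_le_nonZeroDivisors_of_noZeroDivisors hπ.ne_zero) fun s hs => ?_).mpr inferInstance
  obtain ⟨n, u, rfl⟩ := eq_unit_mul_pow_irreducible (nonZeroDivisors.ne_zero hs) hπ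
  exact ⟨π ^ n, ⟨n, rfl⟩, Units.mul_left_dvd.mpr dvd_rfl⟩

attribute [local instance] Polynomial.algebra

theorem AdjoinRoot.isLocalization_away_of_irreducible {R K : Type*} [CommRing R] [IsDomain R]
    [IsDiscreteValuationRing R] [Field K] [Algebra R K] [IsFractionRing R K] {π : R}
    (hπ : Irreducible π) {g : R[X][X]} (hg : g.Monic) :
    letI := (map (algebraMap R[X] K[X]) g _ dvd_rfl).toAlgebra
    IsLocalization.Away (of g (C π)) (AdjoinRoot (g.map (algebraMap R[X] K[X]))) := by
  have := IsDiscreteValuationRing.isLocalization_away (K := K) hπ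
  have := Polynomial.isLocalization (Submonoid.powers π) K
  have hle : (Submonoid.powers π).map C ≤ nonZeroDivisors R[X] := by
    rw [Submonoid.map_powers]
    exact powers_le_nonZeroDivisors_of_noZeroDivisors (C_ne_zero.mpr hπ.ne_zero)
  simpa only [Submonoid.map_powers] using isLocalization_map (A' := K[X]) _ hle hg

theorem liu_normality_lemma_general (R : Type) [CommRing R] [IsDomain R] [IsDiscreteValuationRing R]
    (f : R[X])
    (hgen_dom : IsDomain
      (AdjoinRoot ((X : ((FractionRing R)[X])[X]) ^ 2 - C (f.map (algebraMap R (FractionRing R))))))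
    (hgen_ic : IsIntegrallyClosed
      (AdjoinRoot ((X : ((FractionRing R)[X])[X]) ^ 2 - C (f.map (algebraMap R (FractionRing R)))))) :
    (IsReduced
        (AdjoinRoot ((X : ((IsLocalRing.ResidueField R)[X])[X]) ^ 2 -
          C (f.map (IsLocalRing.residue R)))) →
      IsDomain (AdjoinRoot ((X : (R[X])[X]) ^ 2 - C f)) ∧
        IsIntegrallyClosed (AdjoinRoot ((X : (R[X])[X]) ^ 2 - C f)))
    ∧
    (¬ IsReduced
        (AdjoinRoot ((X : ((IsLocalRing.ResidueField R)[X])[X]) ^ 2 -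
          C (f.map (IsLocalRing.residue R)))) ↔
      (4 : (IsLocalRing.ResidueField R)[X]) * f.map (IsLocalRing.residue R) = 0 ∧
        IsSquare (-(f.map (IsLocalRing.residue R)))) := by
  refine ⟨fun hred => ?_, by rw [AdjoinRoot.isReduced_iff_squarefree (monic_X_sq_sub_C _).ne_zero,
    not_squarefree_X_sq_sub_C_iff]⟩
  set K := FractionRing R
  set G : R[X][X] := X ^ 2 - C f
  have hG : G.Monic := monic_X_sq_sub_C f
  have hGK : X ^ 2 - C (f.map (algebraMap R K)) = G.map (algebraMap R[X] K[X]) := by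
    rw [map_X_sq_sub_C, Polynomial.algebraMap_def, coe_mapRingHom]
  have hGk : X ^ 2 - C (f.map (IsLocalRing.residue R)) =
      G.map (mapRingHom (IsLocalRing.residue R)) := by
    rw [map_X_sq_sub_C, coe_mapRingHom]
  rw [hGK] at hgen_dom hgen_ic
  rw [hGk] at hred
  have : IsDomain (AdjoinRoot G) := (AdjoinRoot.map_injective_of_monic (algebraMap R[X] K[X]) hG
    (map_injective _ (IsFractionRing.injective R K))).isDomain
  obtain ⟨π, hπ⟩ := IsDiscreteValuationRing.exists_irreducible R
  let := (AdjoinRoot.map (algebraMap R[X] K[X]) G _ dvd_rfl).toAlgebra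
  have := AdjoinRoot.isLocalization_away_of_irreducible (K := K) hπ hG
  refine ⟨inferInstance, IsIntegrallyClosed.of_isLocalization_away
    (L := AdjoinRoot (G.map (algebraMap R[X] K[X]))) (π := AdjoinRoot.of G (C π)) ?_ ?_⟩
  · refine (map_ne_zero_iff _ (AdjoinRoot.of.injective_of_degree_ne_zero ?_)).mpr
      (C_ne_zero.mpr hπ.ne_zero)
    simp [G, degree_X_pow_sub_C]
  · rw [isRadical_iff_span_singleton,
      ← AdjoinRoot.ker_map_residue_of_monic hπ.maximalIdeal_eq hG]
    exact Ideal.isRadical_bot.comap _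

/-- Liu's lemma.  Let `R` be a DVR with perfect residue field `k` and
fraction field `K`, and let `f ∈ R[X]`.  Assume that the generic fiber
`K[X,Y]/(Y² - f)` is an integrally closed integral domain.  Then:
(a) if `k[X,Y]/(Y² - f̃)` is reduced then `R[X,Y]/(Y² - f)` is an integrally closed
integral domain; and
(b) `k[X,Y]/(Y² - f̃)` is not reduced iff `4·f̃ = 0` and `-f̃` is a square in `k[X]`. -/
theorem liu_normality_lemma (R : Type) [CommRing R] [IsDomain R] [IsDiscreteValuationRing R]
    [PerfectField (IsLocalRing.ResidueField R)] (f : R[X])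
    (hgen_dom : IsDomain
      (AdjoinRoot ((X : ((FractionRing R)[X])[X]) ^ 2 - C (f.map (algebraMap R (FractionRing R))))))
    (hgen_ic : IsIntegrallyClosed
      (AdjoinRoot ((X : ((FractionRing R)[X])[X]) ^ 2 - C (f.map (algebraMap R (FractionRing R)))))) :
    (IsReduced
        (AdjoinRoot ((X : ((IsLocalRing.ResidueField R)[X])[X]) ^ 2 -
          C (f.map (IsLocalRing.residue R)))) →
      IsDomain (AdjoinRoot ((X : (R[X])[X]) ^ 2 - C f)) ∧
        IsIntegrallyClosed (AdjoinRoot ((X : (R[X])[X]) ^ 2 - C f)))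
    ∧
    (¬ IsReduced
        (AdjoinRoot ((X : ((IsLocalRing.ResidueField R)[X])[X]) ^ 2 -
          C (f.map (IsLocalRing.residue R)))) ↔
      (4 : (IsLocalRing.ResidueField R)[X]) * f.map (IsLocalRing.residue R) = 0 ∧
        IsSquare (-(f.map (IsLocalRing.residue R)))) :=
  liu_normality_lemma_general R f hgen_dom hgen_ic
end

section
/- Let R be a commutative ring, let a, b, c ∈ R, set D = b² − ac, and let S = R[Y]/(Y² − D) with y the image of Y. Then the ideal identity (a, y − b)·(a, y + b) = (a)·(a, y − b, y + b, c) holds in S. In particular, if the ideal (a, 2b, c) equals the unit ideal of R, then (a, y − b)·(a, y + b) = (a); hence if moreover S is an integral domain and a ≠ 0, the ideal (a, y − b) is invertible as a fractional ideal of S, with inverse (1/a)(a, y + b). -/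
/-!
In `S` we have `(y - b)(y + b) = y² - b² = -ac`, so the four products generating
`(a, y - b)·(a, y + b)` are `a·a, a·(y + b), a·(y - b)` and `-a·c`, which generate
`(a)·(a, y - b, y + b, c)`. The second factor contains `2b = (y + b) - (y - b)`, hence it is the
unit ideal once `(a, 2b, c)` is. Finally `a ≠ 0` in `S` because `R` embeds into `S`
(`Y² - D` is monic of degree 2), so `(1/a)(a, y + b)` is an inverse of `(a, y - b)`.
-/

open Polynomial

noncomputable section

/-- The quadratic algebra `S = R[Y]/(Y² - D)`. -/
abbrev QAlg (R : Type) [CommRing R] (D : R) : Type := AdjoinRoot ((X : R[X]) ^ 2 - C D)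

/-- The image `y` of `Y` in `R[Y]/(Y² - D)`. -/
abbrev qY (R : Type) [CommRing R] (D : R) : QAlg R D := AdjoinRoot.root _

/-- The structure map `R → R[Y]/(Y² - D)`. -/
abbrev qι (R : Type) [CommRing R] (D : R) : R →+* QAlg R D := AdjoinRoot.of _

open scoped nonZeroDivisors

theorem Ideal.span_pair_mul_span_pair_of_mul_eq_neg_mul {S : Type*} [CommRing S] {a u v c : S}
    (h : u * v = -(a * c)) :
    span {a, u} * span {a, v} = span {a} * span {a, u, v, c} := by
  rw [span_pair_mul_span_pair, span_mul_span', Set.singleton_mul, mul_comm u a, h]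
  simp only [Set.image_insert_eq, Set.image_singleton]
  rw [Set.insert_comm (a * v)]
  simp only [span_insert, span_singleton_neg]

theorem Ideal.span_map_sub_add_eq_top {R S : Type*} [CommRing R] [CommRing S] (f : R →+* S)
    {a b c : R} (y : S) (h : span ({a, 2 * b, c} : Set R) = ⊤) :
    span {f a, y - f b, y + f b, f c} = ⊤ := by
  rw [eq_top_iff, ← map_top f, ← h, map_span, span_le]
  have h2b : f (2 * b) = (y + f b) - (y - f b) := by rw [map_mul, map_ofNat]; ring
  rintro _ ⟨r, hr, rfl⟩
  simp only [Set.mem_insert_iff, Set.mem_singleton_iff] at hr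
  rcases hr with rfl | rfl | rfl
  · exact subset_span (by simp)
  · rw [h2b]
    exact sub_mem (subset_span (by simp)) (subset_span (by simp))
  · exact subset_span (by simp)

theorem FractionalIdeal.exists_mul_eq_one_of_mul_eq_span_singleton {S K : Type*} [CommRing S]
    [IsDomain S] [Field K] [Algebra S K] [IsFractionRing S K] {I J : Ideal S} {x : S}
    (hIJ : I * J = Ideal.span {x}) (hx : x ≠ 0) :
    ∃ J' : FractionalIdeal S⁰ K, (I : FractionalIdeal S⁰ K) * J' = 1 ∧
      spanSingleton S⁰ (algebraMap S K x) * J' = (J : FractionalIdeal S⁰ K) := by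
  have hx' : algebraMap S K x ≠ 0 := (map_ne_zero_iff _ (IsFractionRing.injective S K)).2 hx
  refine ⟨spanSingleton _ (algebraMap S K x)⁻¹ * (J : FractionalIdeal S⁰ K), ?_, ?_⟩
  · rw [mul_left_comm, ← coeIdeal_mul, hIJ, coeIdeal_span_singleton,
      spanSingleton_mul_spanSingleton, inv_mul_cancel₀ hx', spanSingleton_one]
  · rw [← mul_assoc, spanSingleton_mul_spanSingleton, mul_inv_cancel₀ hx', spanSingleton_one,
      one_mul]

theorem AdjoinRoot.of_injective_of_monic {R : Type*} [CommRing R] {f : R[X]} (hf : f.Monic)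
    (hd : 0 < f.natDegree) : Function.Injective (AdjoinRoot.of f) := by
  refine (injective_iff_map_eq_zero _).2 fun r hr => ?_
  by_contra hr0
  exact mk_ne_zero_of_natDegree_lt hf (C_ne_zero.2 hr0) (by rwa [natDegree_C]) hr

theorem qι_injective (R : Type) [CommRing R] [Nontrivial R] (D : R) :
    Function.Injective (qι R D) :=
  AdjoinRoot.of_injective_of_monic (monic_X_pow_sub_C D two_ne_zero)
    (by rw [natDegree_X_pow_sub_C]; norm_num)

theorem qY_sq (R : Type) [CommRing R] (D : R) : qY R D ^ 2 = qι R D D := by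
  have h := AdjoinRoot.eval₂_root ((X : R[X]) ^ 2 - C D)
  rwa [eval₂_sub, eval₂_X_pow, eval₂_C, sub_eq_zero] at h

theorem qY_sub_mul_qY_add {R : Type} [CommRing R] {a b c D : R} (hD : D = b ^ 2 - a * c) :
    (qY R D - qι R D b) * (qY R D + qι R D b) = -(qι R D a * qι R D c) := by
  have hD' := congrArg (qι R D) hD
  rw [map_sub, map_pow, map_mul] at hD'
  linear_combination qY_sq R D + hD'

/-- Let `R` be a commutative ring, `a b c ∈ R`, `D = b² - ac`, and
`S = R[Y]/(Y² - D)` with `y` the image of `Y`.  Then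
`(a, y-b)·(a, y+b) = (a)·(a, y-b, y+b, c)`.  If `(a, 2b, c) = (1)` then
`(a, y-b)·(a, y+b) = (a)`; hence if moreover `S` is a domain and `a ≠ 0`, the ideal
`(a, y-b)` is invertible as a fractional ideal of `S` with inverse `(1/a)·(a, y+b)`
(i.e. there is a fractional ideal `J` with `(a,y-b)·J = 1` and `a·J = (a, y+b)`). -/
theorem quadratic_form_ideal_identity (R : Type) [CommRing R] (a b c D : R)
    (hD : D = b ^ 2 - a * c) :
    (Ideal.span {qι R D a, qY R D - qι R D b} * Ideal.span {qι R D a, qY R D + qι R D b} =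
        Ideal.span {qι R D a} *
          Ideal.span {qι R D a, qY R D - qι R D b, qY R D + qι R D b, qι R D c})
    ∧
    (Ideal.span ({a, 2 * b, c} : Set R) = ⊤ →
      (Ideal.span {qι R D a, qY R D - qι R D b} * Ideal.span {qι R D a, qY R D + qι R D b} =
          Ideal.span {qι R D a})
      ∧
      (IsDomain (QAlg R D) → a ≠ 0 →
        ∃ J : FractionalIdeal (nonZeroDivisors (QAlg R D)) (FractionRing (QAlg R D)),
          (Ideal.span {qι R D a, qY R D - qι R D b} : Ideal (QAlg R D)) * J = 1 ∧
            FractionalIdeal.spanSingleton (nonZeroDivisors (QAlg R D))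
              (algebraMap (QAlg R D) (FractionRing (QAlg R D)) (qι R D a)) * J =
              (Ideal.span {qι R D a, qY R D + qι R D b} : Ideal (QAlg R D)))) := by
  have hprod := Ideal.span_pair_mul_span_pair_of_mul_eq_neg_mul (qY_sub_mul_qY_add hD)
  refine ⟨hprod, fun htop => ?_⟩
  rw [Ideal.span_map_sub_add_eq_top (qι R D) (qY R D) htop, Ideal.mul_top] at hprod
  refine ⟨hprod, fun _ ha => ?_⟩
  have : Nontrivial R := nontrivial_of_ne a 0 ha
  exact FractionalIdeal.exists_mul_eq_one_of_mul_eq_span_singleton hprod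
    ((map_ne_zero_iff _ (qι_injective R D)).2 ha)
end
end

section
/- Let D be an integer which is not a square, so that ℤ[√D] = ℤ[Y]/(Y² − D) is a non-degenerate quadratic ℤ-algebra. Then for every nonzero ideal I of ℤ[√D] there exist integers q, a, b with a dividing b² − D such that I = (q)·(a, √D − b), and the absolute norm of I satisfies Norm(I) = #(ℤ[√D]/I) = |q²a|. -/
/-!
As a lattice in `ℤ²`, every ideal `I` of `ℤ[√D]` has a basis in Hermite normal form
`m, c + g√D`, where `g` generates the `√D`-coordinates of elements of `I` and `m` generates
`I ∩ ℤ`. Closure of `I` under multiplication by `√D` forces `g ∣ m` and `g ∣ c`; writing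
`m = g a` and `c = -g b` gives `I = (g)·(a, √D - b)`, and `a ∣ b² - D` because
`g (√D - b)(√D + b) = g (D - b²)` lies in `I ∩ ℤ = (g a)`. The index of the lattice is the
determinant `|m g| = |g² a|`; it is finite because `I` contains the integer `N(z) = z z̄`, nonzero
for `z ≠ 0` since `D` is not a square.
-/

open Submodule

theorem Ideal.eq_span_of_restrictScalars_eq_span {R S : Type*} [CommSemiring R] [CommSemiring S]
    [Algebra R S] {I : Ideal S} {s : Set S} (h : I.restrictScalars R = Submodule.span R s) :
    I = Ideal.span s :=
  calc I = Submodule.span S (I.restrictScalars R : Set S) := (Ideal.span_eq I).symm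
    _ = Submodule.span S (Submodule.span R s : Set S) := by rw [h]
    _ = Ideal.span s := span_span_of_tower R S s

namespace Zsqrtd

variable {D : ℤ}

def imₗ : ℤ√D →ₗ[ℤ] ℤ :=
  AddMonoidHom.toIntLinearMap { toFun := im, map_zero' := rfl, map_add' := im_add }

variable (D) in
noncomputable def basisOneSqrtd : Module.Basis (Fin 2) ℤ (ℤ√D) :=
  .ofEquivFun <| AddEquiv.toIntLinearEquiv
    { toFun z := ![z.re, z.im]
      invFun f := ⟨f 0, f 1⟩
      left_inv _ := rfl
      right_inv f := by ext i; fin_cases i <;> rfl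
      map_add' x y := by ext i; fin_cases i <;> rfl }

@[simp] theorem basisOneSqrtd_repr (z : ℤ√D) (i : Fin 2) :
    (basisOneSqrtd D).repr z i = ![z.re, z.im] i :=
  rfl

instance : Module.Free ℤ (ℤ√D) := .of_basis (basisOneSqrtd D)

instance : Module.Finite ℤ (ℤ√D) := .of_basis (basisOneSqrtd D)

theorem mem_span_pair_iff {m c g : ℤ} {z : ℤ√D} :
    z ∈ span ℤ {(m : ℤ√D), ⟨c, g⟩} ↔ ∃ j k : ℤ, z.re = j * m + k * c ∧ z.im = k * g := by
  simp only [mem_span_pair, Zsqrtd.ext_iff, zsmul_eq_mul]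
  constructor
  · rintro ⟨j, k, hre, him⟩
    exact ⟨j, k, by simp [← hre], by simp [← him]⟩
  · rintro ⟨j, k, hre, him⟩
    exact ⟨j, k, by simp [hre], by simp [him]⟩

theorem dvd_of_intCast_mem_span_pair {m c g x : ℤ} (hg : g ≠ 0)
    (hx : (x : ℤ√D) ∈ span ℤ {(m : ℤ√D), ⟨c, g⟩}) : m ∣ x := by
  obtain ⟨j, k, hre, him⟩ := mem_span_pair_iff.1 hx
  obtain rfl : k = 0 := by simpa [hg] using him.symm
  exact ⟨j, by simpa [mul_comm] using hre⟩

theorem exists_submodule_eq_span_pair (N : Submodule ℤ (ℤ√D)) :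
    ∃ m c g : ℤ, N = span ℤ {(m : ℤ√D), ⟨c, g⟩} := by
  obtain ⟨g, hg⟩ := IsPrincipal.principal (N.map imₗ)
  obtain ⟨m, hm⟩ := IsPrincipal.principal (N.comap (Algebra.linearMap ℤ (ℤ√D)))
  have mem_im {y : ℤ} : y ∈ N.map imₗ ↔ ∃ k : ℤ, k * g = y := by
    rw [hg, mem_span_singleton]; rfl
  have mem_int {x : ℤ} : (x : ℤ√D) ∈ N ↔ ∃ j : ℤ, j * m = x := by
    rw [← eq_intCast (algebraMap ℤ (ℤ√D)), ← Algebra.linearMap_apply, ← mem_comap, hm,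
      mem_span_singleton]; rfl
  obtain ⟨z₀, hz₀, hz₀g⟩ := mem_map.1 (mem_im.2 ⟨1, one_mul g⟩)
  have hcg : (⟨z₀.re, g⟩ : ℤ√D) ∈ N := hz₀g ▸ hz₀
  refine ⟨m, z₀.re, g, _root_.le_antisymm (fun z hz => ?_) ?_⟩
  · obtain ⟨k, hk : k * g = z.im⟩ := mem_im.1 (mem_map_of_mem hz)
    obtain ⟨j, hj⟩ := (mem_int (x := z.re - k * z₀.re)).1 <| by
      convert N.sub_mem hz (N.smul_mem k hcg) using 1
      ext <;> simp [hk]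
    exact mem_span_pair_iff.2 ⟨j, k, by linarith, hk.symm⟩
  · rw [span_le, Set.insert_subset_iff, Set.singleton_subset_iff]
    exact ⟨mem_int.2 ⟨1, one_mul m⟩, hcg⟩

theorem exists_ideal_restrictScalars_eq_span_pair (I : Ideal (ℤ√D)) :
    ∃ g a b : ℤ, I.restrictScalars ℤ = span ℤ {((g * a : ℤ) : ℤ√D), ⟨-(g * b), g⟩} := by
  obtain ⟨m, c, g, hspan⟩ := exists_submodule_eq_span_pair (I.restrictScalars ℤ)
  have mem {z : ℤ√D} (hz : z ∈ I) : ∃ j k : ℤ, z.re = j * m + k * c ∧ z.im = k * g :=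
    mem_span_pair_iff.1 (hspan ▸ hz)
  have hgen : ({(m : ℤ√D), ⟨c, g⟩} : Set (ℤ√D)) ⊆ I.restrictScalars ℤ := hspan ▸ subset_span
  obtain ⟨hmI, hcI⟩ : (m : ℤ√D) ∈ I ∧ (⟨c, g⟩ : ℤ√D) ∈ I := by
    simpa [Set.insert_subset_iff] using hgen
  obtain ⟨-, a, -, hm⟩ := mem (I.mul_mem_right sqrtd hmI)
  obtain ⟨-, b, -, hc⟩ := mem (I.mul_mem_right sqrtd hcI)
  obtain rfl : m = a * g := by simpa using hm
  obtain rfl : c = b * g := by simpa using hc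
  exact ⟨g, a, -b, by simp [hspan, mul_comm]⟩

theorem dvd_sq_sub_of_restrictScalars_eq_span_pair {I : Ideal (ℤ√D)} {g a b : ℤ} (hg : g ≠ 0)
    (hspan : I.restrictScalars ℤ = span ℤ {((g * a : ℤ) : ℤ√D), ⟨-(g * b), g⟩}) :
    a ∣ b ^ 2 - D := by
  have hv : (⟨-(g * b), g⟩ : ℤ√D) ∈ I.restrictScalars ℤ := hspan ▸ subset_span (by simp)
  have hw : ((g * (D - b ^ 2) : ℤ) : ℤ√D) ∈ I := by
    convert I.mul_mem_right ⟨b, 1⟩ hv using 1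
    ext <;> simp only [re_intCast, im_intCast, re_mul, im_mul] <;> ring
  rw [← restrictScalars_mem ℤ, hspan] at hw
  exact dvd_sub_comm.1 ((mul_dvd_mul_iff_left hg).1 (dvd_of_intCast_mem_span_pair hg hw))

theorem card_quotient_span_pair {m c g : ℤ} (hm : m ≠ 0) (hg : g ≠ 0) :
    Nat.card (ℤ√D ⧸ span ℤ {(m : ℤ√D), ⟨c, g⟩}) = (m * g).natAbs := by
  have hli : LinearIndependent ℤ ![(m : ℤ√D), ⟨c, g⟩] := by
    refine LinearIndependent.pair_iff.2 fun s t hst => ?_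
    have ht : t = 0 := by simpa [hg] using congrArg im hst
    exact ⟨by simpa [ht, hm] using congrArg re hst, ht⟩
  rw [← Matrix.range_cons_cons_empty _ _ ![],
    ← natAbs_det_basis_change (basisOneSqrtd D) _ (Module.Basis.span hli),
    Module.Basis.det_apply, Matrix.det_fin_two]
  simp [Module.Basis.toMatrix_apply]

theorem exists_intCast_mem_ne_zero (hD : ¬ IsSquare D) {I : Ideal (ℤ√D)} (hI : I ≠ ⊥) :
    ∃ n : ℤ, n ≠ 0 ∧ (n : ℤ√D) ∈ I := by
  obtain ⟨z, hzI, hz⟩ := exists_mem_ne_zero_of_ne_bot hI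
  refine ⟨z.norm, ?_, norm_eq_mul_conj z ▸ I.mul_mem_right _ hzI⟩
  rwa [Ne, norm_eq_zero fun n hn => hD ⟨n, hn⟩]

end Zsqrtd

open Zsqrtd in
/-- Let `D` be a non-square integer.  For every nonzero ideal `I` of
`ℤ[√D]` there are integers `q, a, b` with `a ∣ b² - D` such that
`I = (q)·(a, √D - b)`, and `Norm(I) = #(ℤ[√D]/I) = |q²a|`. -/
theorem ideal_normal_form_and_norm (D : ℤ) (hD : ¬ IsSquare D)
    (I : Ideal (Zsqrtd D)) (hI : I ≠ ⊥) :
    ∃ q a b : ℤ, a ∣ b ^ 2 - D ∧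
      I = Ideal.span {(q : Zsqrtd D)} *
        Ideal.span {(a : Zsqrtd D), Zsqrtd.sqrtd - (b : Zsqrtd D)} ∧
      Nat.card (Zsqrtd D ⧸ I) = (q ^ 2 * a).natAbs := by
  obtain ⟨g, a, b, hspan⟩ := exists_ideal_restrictScalars_eq_span_pair I
  obtain ⟨n, hn, hnI⟩ := exists_intCast_mem_ne_zero hD hI
  have hnI' : (n : ℤ√D) ∈ span ℤ {((g * a : ℤ) : ℤ√D), ⟨-(g * b), g⟩} := hspan ▸ hnI
  have hg : g ≠ 0 := by
    rintro rfl
    obtain ⟨j, k, hre, -⟩ := mem_span_pair_iff.1 hnI'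
    exact hn (by simpa using hre)
  have ha : a ≠ 0 := by
    rintro rfl
    simpa [hn] using dvd_of_intCast_mem_span_pair hg hnI'
  refine ⟨g, a, b, dvd_sq_sub_of_restrictScalars_eq_span_pair hg hspan, ?_, ?_⟩
  · have hv : (⟨-(g * b), g⟩ : ℤ√D) = (g : ℤ√D) * (sqrtd - (b : ℤ√D)) := by ext <;> simp
    rw [Ideal.eq_span_of_restrictScalars_eq_span hspan, Ideal.span_mul_span', Set.singleton_mul,
      Set.image_pair, Int.cast_mul, hv]
  · change Nat.card (ℤ√D ⧸ I.restrictScalars ℤ) = _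
    rw [hspan, card_quotient_span_pair (mul_ne_zero hg ha) hg]
    congr 1
    ring
end

section
/- Let D be an integer which is not a square. If a₁, a₂, b are integers with gcd(a₁, a₂) = 1 and a₁a₂ dividing b² − D, then in ℤ[√D] one has the ideal identity (a₁, √D − b)·(a₂, √D − b) = (a₁a₂, √D − b). -/
/-! Expanding, `(a₁, y)(a₂, y) = (a₁a₂) + y·(a₁, a₂, y)`, and `(a₁, a₂)` is the unit ideal
because `a₁, a₂` are coprime. -/

namespace Ideal

variable {R : Type*} [CommSemiring R]

theorem sup_mul_sup_eq_mul_sup_of_sup_eq_top {I J K : Ideal R} (h : I ⊔ J = ⊤) :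
    (I ⊔ K) * (J ⊔ K) = I * J ⊔ K := by
  refine le_antisymm ?_ (sup_le (mul_mono le_sup_left le_sup_left) ?_)
  · rw [sup_mul, mul_sup, mul_sup]
    exact sup_le (sup_le_sup_left mul_le_right _)
      (sup_le (le_sup_of_le_right mul_le_left) (le_sup_of_le_right mul_le_left))
  · calc K = K * (I ⊔ J) := by rw [h, mul_top]
      _ = I * K ⊔ K * J := by rw [mul_sup, mul_comm K I]
      _ ≤ (I ⊔ K) * (J ⊔ K) :=
        sup_le (mul_mono le_sup_left le_sup_right) (mul_mono le_sup_right le_sup_left)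

theorem span_pair_mul_span_pair_of_isCoprime {a₁ a₂ : R} (y : R) (h : IsCoprime a₁ a₂) :
    span {a₁, y} * span {a₂, y} = span {a₁ * a₂, y} := by
  simp only [span_insert]
  rw [sup_mul_sup_eq_mul_sup_of_sup_eq_top ((isCoprime_span_singleton_iff a₁ a₂).2 h).sup_eq,
    span_singleton_mul_span_singleton]

end Ideal

theorem ideal_product_coprime_general (D : ℤ) (a₁ a₂ b : ℤ)
    (hcop : Int.gcd a₁ a₂ = 1) :
    Ideal.span {(a₁ : Zsqrtd D), Zsqrtd.sqrtd - (b : Zsqrtd D)} *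
      Ideal.span {(a₂ : Zsqrtd D), Zsqrtd.sqrtd - (b : Zsqrtd D)} =
      Ideal.span {((a₁ * a₂ : ℤ) : Zsqrtd D), Zsqrtd.sqrtd - (b : Zsqrtd D)} := by
  rw [Int.cast_mul]
  exact Ideal.span_pair_mul_span_pair_of_isCoprime _
    ((Int.isCoprime_iff_gcd_eq_one.2 hcop).intCast)

/-- Let `D` be a non-square integer.  If `a₁, a₂, b` are integers with
`gcd(a₁, a₂) = 1` and `a₁a₂ ∣ b² - D`, then in `ℤ[√D]` one has
`(a₁, √D - b)·(a₂, √D - b) = (a₁a₂, √D - b)`. -/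
theorem ideal_product_coprime (D : ℤ) (hD : ¬ IsSquare D) (a₁ a₂ b : ℤ)
    (hcop : Int.gcd a₁ a₂ = 1) (hdvd : a₁ * a₂ ∣ b ^ 2 - D) :
    Ideal.span {(a₁ : Zsqrtd D), Zsqrtd.sqrtd - (b : Zsqrtd D)} *
      Ideal.span {(a₂ : Zsqrtd D), Zsqrtd.sqrtd - (b : Zsqrtd D)} =
      Ideal.span {((a₁ * a₂ : ℤ) : Zsqrtd D), Zsqrtd.sqrtd - (b : Zsqrtd D)} :=
  ideal_product_coprime_general D a₁ a₂ b hcop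
end

section
/- Let f ∈ ℤ[X] be a monic polynomial of odd degree 2g+1 with g ≥ 1. Let Λ ⊆ ℤ and, for each n ∈ Λ, let a(n), b(n), c(n) be integers with b(n)² − a(n)c(n) = f(n). Suppose there exist a non-constant polynomial h ∈ ℚ[X] with deg h < deg f and an integer M ≥ 1 such that |h(n)|/M ≤ |a(n)| ≤ |h(n)| for all n ∈ Λ. Then there exists n₀ ∈ ℤ such that for every n ∈ Λ with n ≤ n₀, the quadratic form [a(n), 2b(n), c(n)] is not equivalent to the identity form [1, 0, −f(n)]: there exist no integers α, β, γ, δ with αδ − βγ = ±1 and no sign ε ∈ {1, −1} such that X² − f(n)Y² = ε·( a(n)(αX+βY)² + 2b(n)(αX+βY)(γX+δY) + c(n)(γX+δY)² ) holds identically in X, Y. -/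
/-!
If `[a, 2b, c]` were equivalent to `[1, 0, -f(n)]`, it would represent `±1`, say at `(x, y)`.
Completing the square, `a · (±1) = (a x + b y)² - f(n) y²`. For `n` very negative,
`|M| < |h(n)| < -f(n)`, so the bounds on `a` give `1 < |a| < -f(n)`: the case `y ≠ 0` makes
the right side at least `-f(n) > |a|`, and the case `y = 0` forces `|a| = (a x)²`, hence
`|a| = 1`.
-/

open Polynomial Filter

theorem abs_form_ne_one_of_one_lt_abs_of_abs_lt_neg_disc {a b c : ℤ} (h1 : 1 < |a|)
    (h2 : |a| < -(b ^ 2 - a * c)) (x y : ℤ) : |a * x ^ 2 + 2 * b * x * y + c * y ^ 2| ≠ 1 := by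
  intro hQ
  have hsq : |a| = (a * x + b * y) ^ 2 - (b ^ 2 - a * c) * y ^ 2 := by
    rw [← mul_one |a|, ← hQ, ← abs_mul, abs_eq_self.2] <;>
      nlinarith [sq_nonneg (a * x + b * y), sq_nonneg y]
  rcases eq_or_ne y 0 with rfl | hy
  · have hx : |a| * x ^ 2 = 1 := by
      nlinarith [sq_abs a]
    linarith [Int.le_of_dvd one_pos ⟨x ^ 2, hx.symm⟩]
  · have hy2 : 1 ≤ y ^ 2 := by nlinarith [Int.one_le_abs hy, sq_abs y]
    have hD : -(b ^ 2 - a * c) ≤ -(b ^ 2 - a * c) * y ^ 2 :=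
      le_mul_of_one_le_right (by linarith) hy2
    nlinarith [sq_nonneg (a * x + b * y)]

theorem one_lt_of_abs_lt_of_le_mul {R : Type*} [CommRing R] [LinearOrder R]
    [IsStrictOrderedRing R] {M s t : R} (hs : 0 ≤ s) (hlt : |M| < t) (hle : t ≤ M * s) :
    1 < s := by
  have hMs : M * s ≤ |M| * s := mul_le_mul_of_nonneg_right (le_abs_self M) hs
  nlinarith [abs_nonneg M]

namespace Polynomial

variable {𝕜 : Type*} [NormedField 𝕜] [LinearOrder 𝕜] [IsStrictOrderedRing 𝕜]
  [OrderTopology 𝕜] {P Q : 𝕜[X]}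

theorem tendsto_atBot_atBot_of_odd (hodd : Odd P.natDegree) (hlc : 0 < P.leadingCoeff) :
    Tendsto (P.eval ·) atBot atBot := by
  have hdeg : 0 < (P.comp (-X)).degree := by
    rw [← natDegree_pos_iff_degree_pos, natDegree_comp]
    simpa using hodd.pos
  have hlc' : (P.comp (-X)).leadingCoeff ≤ 0 := by
    rw [comp_neg_X_leadingCoeff_eq, hodd.neg_one_pow]
    linarith
  simpa [Function.comp_def] using
    (tendsto_atBot_of_leadingCoeff_nonpos _ hdeg hlc').comp tendsto_neg_atBot_atTop

theorem eventually_abs_eval_lt_neg_eval (hodd : Odd P.natDegree) (hlc : 0 < P.leadingCoeff)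
    (hQ : Q.degree < P.degree) : ∀ᶠ x in atBot, |Q.eval x| < -P.eval x := by
  have hQ' : (-Q).degree < P.degree := by rwa [degree_neg]
  have hneg {R : 𝕜[X]} (hR : R.degree < P.degree) : ∀ᶠ x in atBot, (P + R).eval x < 0 := by
    refine (tendsto_atBot_atBot_of_odd ?_ ?_).eventually_lt_atBot 0
    · rwa [natDegree_add_eq_left_of_degree_lt hR]
    · rwa [leadingCoeff_add_of_degree_lt' hR]
  filter_upwards [hneg hQ, hneg hQ'] with x hplus hminus
  rw [eval_add] at hplus
  rw [eval_add, eval_neg] at hminus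
  exact abs_lt.2 ⟨by linarith, by linarith⟩

end Polynomial

theorem key_lemma_not_equivalent_to_identity_general (g : ℕ) (f : ℤ[X])
    (hmonic : f.Monic) (hdeg : f.natDegree = 2 * g + 1)
    (Λ : Set ℤ) (a b c : ℤ → ℤ)
    (hdisc : ∀ n ∈ Λ, (b n) ^ 2 - (a n) * (c n) = f.eval n)
    (h : ℚ[X]) (hh : 1 ≤ h.natDegree) (hhf : h.natDegree < f.natDegree)
    (M : ℤ)
    (hlow : ∀ n ∈ Λ, |h.eval (n : ℚ)| ≤ (M : ℚ) * |(a n : ℚ)|)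
    (hup : ∀ n ∈ Λ, |(a n : ℚ)| ≤ |h.eval (n : ℚ)|) :
    ∃ n₀ : ℤ, ∀ n ∈ Λ, n ≤ n₀ →
      ¬ ∃ α β γ δ ε : ℤ, (α * δ - β * γ = 1 ∨ α * δ - β * γ = -1) ∧
          (ε = 1 ∨ ε = -1) ∧
          ∀ x y : ℤ, x ^ 2 - f.eval n * y ^ 2 =
            ε * (a n * (α * x + β * y) ^ 2 +
              2 * b n * (α * x + β * y) * (γ * x + δ * y) +
              c n * (γ * x + δ * y) ^ 2) := by
  set F := f.map (Int.castRingHom ℚ)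
  have hF : F.natDegree = f.natDegree := hmonic.natDegree_map _
  have hsmall : ∀ᶠ x in atBot, |h.eval x| < -F.eval x :=
    eventually_abs_eval_lt_neg_eval (by rw [hF, hdeg]; exact odd_two_mul_add_one g)
      (by rw [(hmonic.map _).leadingCoeff]; exact one_pos)
      (degree_lt_degree (hF ▸ hhf))
  have hlarge : ∀ᶠ x in atBot, (|M| : ℚ) < |h.eval x| :=
    (abs_tendsto_atBot h (natDegree_pos_iff_degree_pos.1 hh)).eventually_gt_atTop _
  obtain ⟨n₀, hn₀⟩ := eventually_atBot.1
    ((tendsto_intCast_atBot_iff.2 tendsto_id).eventually (hsmall.and hlarge))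
  refine ⟨n₀, fun n hn hle ⟨α, β, γ, δ, ε, _, hε, hid⟩ => ?_⟩
  obtain ⟨hsmall, hlarge⟩ := hn₀ n hle
  simp only [id, F, eval_map, eval₂_at_intCast, eq_intCast] at hsmall hlarge
  have h1 : 1 < |a n| := by
    exact_mod_cast one_lt_of_abs_lt_of_le_mul (abs_nonneg _) hlarge (hlow n hn)
  have h2 : |a n| < -(b n ^ 2 - a n * c n) := by
    rw [hdisc n hn]
    exact_mod_cast (hup n hn).trans_lt hsmall
  refine abs_form_ne_one_of_one_lt_abs_of_abs_lt_neg_disc h1 h2 α γ ?_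
  have hrep : ε * (a n * α ^ 2 + 2 * b n * α * γ + c n * γ ^ 2) = 1 := by
    linear_combination -(hid 1 0)
  have hε1 : |ε| = 1 := by rcases hε with rfl | rfl <;> rfl
  simpa [abs_mul, hε1] using congrArg abs hrep

/-- Lemma 4.3, key lemma.  Let `f ∈ ℤ[X]` be monic of odd degree
`2g+1`, `g ≥ 1`.  Given a family of quadratic forms `[a(n), 2b(n), c(n)]` of discriminant
`4f(n)` indexed by `n ∈ Λ ⊆ ℤ`, such that `|h(n)|/M ≤ |a(n)| ≤ |h(n)|` on `Λ` for a
nonconstant `h ∈ ℚ[X]` with `deg h < deg f` and some `M ≥ 1`, there is `n₀` such that for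
all `n ∈ Λ` with `n ≤ n₀` the form `[a(n), 2b(n), c(n)]` is not equivalent to the identity
form `[1, 0, -f(n)]`. -/
theorem key_lemma_not_equivalent_to_identity (g : ℕ) (hg : 1 ≤ g) (f : ℤ[X])
    (hmonic : f.Monic) (hdeg : f.natDegree = 2 * g + 1)
    (Λ : Set ℤ) (a b c : ℤ → ℤ)
    (hdisc : ∀ n ∈ Λ, (b n) ^ 2 - (a n) * (c n) = f.eval n)
    (h : ℚ[X]) (hh : 1 ≤ h.natDegree) (hhf : h.natDegree < f.natDegree)
    (M : ℤ) (hM : 1 ≤ M)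
    (hlow : ∀ n ∈ Λ, |h.eval (n : ℚ)| ≤ (M : ℚ) * |(a n : ℚ)|)
    (hup : ∀ n ∈ Λ, |(a n : ℚ)| ≤ |h.eval (n : ℚ)|) :
    ∃ n₀ : ℤ, ∀ n ∈ Λ, n ≤ n₀ →
      ¬ ∃ α β γ δ ε : ℤ, (α * δ - β * γ = 1 ∨ α * δ - β * γ = -1) ∧
          (ε = 1 ∨ ε = -1) ∧
          ∀ x y : ℤ, x ^ 2 - f.eval n * y ^ 2 =
            ε * (a n * (α * x + β * y) ^ 2 +
              2 * b n * (α * x + β * y) * (γ * x + δ * y) +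
              c n * (γ * x + δ * y) ^ 2) :=
  key_lemma_not_equivalent_to_identity_general g f hmonic hdeg Λ a b c hdisc h hh hhf M hlow hup
end

section
/- Let D < 0 be an integer and let a, b, c be integers with b² − ac = D. If the quadratic form [a, 2b, c] is equivalent to the identity form [1, 0, −D], i.e. there exist integers α, β, γ, δ with αδ − βγ = ±1 and a sign ε ∈ {1, −1} such that X² − DY² = ε·( a(αX+βY)² + 2b(αX+βY)(γX+δY) + c(γX+δY)² ) identically, then |a| = 1 or |a| ≥ −D = |D|. -/
/-!
Substituting the preimage `(δ, -γ)` of `(1, 0)` into the equivalence shows that `ε a` is the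
value `δ² - Dγ²` of the identity form. If `γ = 0`, unimodularity forces `δ = ±1`, so `|a| = 1`;
otherwise `γ² ≥ 1` and `δ² - Dγ² ≥ -D`.
-/

theorem sign_mul_leading_coeff_eq_of_equiv {R : Type*} [CommRing R] {D a b c α β γ δ ε : R}
    (hdet : (α * δ - β * γ) ^ 2 = 1)
    (hid : ∀ x y : R, x ^ 2 - D * y ^ 2 =
      ε * (a * (α * x + β * y) ^ 2 + 2 * b * (α * x + β * y) * (γ * x + δ * y) +
        c * (γ * x + δ * y) ^ 2)) :
    ε * a = δ ^ 2 - D * γ ^ 2 := by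
  have h := hid δ (-γ)
  rw [show α * δ + β * -γ = α * δ - β * γ by ring, show γ * δ + δ * -γ = 0 by ring] at h
  linear_combination -h - ε * a * hdet

theorem abs_eq_of_sign_mul_eq {R : Type*} [Ring R] [LinearOrder R] [IsOrderedRing R]
    {ε a n : R} (hε : ε = 1 ∨ ε = -1) (h : ε * a = n) (hn : 0 ≤ n) : |a| = n := by
  rw [← abs_of_nonneg hn, ← h, abs_mul]
  rcases hε with rfl | rfl <;> simp

theorem sq_eq_one_of_mul_sq_eq_one {α δ : ℤ} (h : (α * δ) ^ 2 = 1) : δ ^ 2 = 1 :=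
  Int.eq_one_of_mul_eq_one_left (sq_nonneg δ) (by rwa [mul_pow] at h)

theorem neg_le_sq_sub_mul_sq {D γ : ℤ} (δ : ℤ) (hD : D ≤ 0) (hγ : γ ≠ 0) :
    -D ≤ δ ^ 2 - D * γ ^ 2 := by
  have hγ_sq : 1 ≤ γ ^ 2 := by nlinarith [Int.one_le_abs hγ, sq_abs γ]
  nlinarith [sq_nonneg δ]

theorem small_leading_coefficient_not_identity_general (D : ℤ) (hD : D < 0) (a b c : ℤ)
    (α β γ δ ε : ℤ)
    (hdet : α * δ - β * γ = 1 ∨ α * δ - β * γ = -1) (hε : ε = 1 ∨ ε = -1)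
    (hid : ∀ x y : ℤ, x ^ 2 - D * y ^ 2 =
      ε * (a * (α * x + β * y) ^ 2 + 2 * b * (α * x + β * y) * (γ * x + δ * y) +
        c * (γ * x + δ * y) ^ 2)) :
    |a| = 1 ∨ -D ≤ |a| := by
  have hdet_sq : (α * δ - β * γ) ^ 2 = 1 := by rcases hdet with h | h <;> rw [h] <;> norm_num
  have hnonneg : 0 ≤ δ ^ 2 - D * γ ^ 2 := by nlinarith [sq_nonneg δ, sq_nonneg γ]
  rw [abs_eq_of_sign_mul_eq hε (sign_mul_leading_coeff_eq_of_equiv hdet_sq hid) hnonneg]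
  rcases eq_or_ne γ 0 with rfl | hγ
  · left
    simpa using sq_eq_one_of_mul_sq_eq_one (by simpa using hdet_sq)
  · exact Or.inr (neg_le_sq_sub_mul_sq δ hD.le hγ)

/-- Let `D < 0` and `a, b, c ∈ ℤ` with `b² - ac = D`.  If the form
`[a, 2b, c]` is equivalent to the identity form `[1, 0, -D]`, then `|a| = 1` or
`|a| ≥ -D = |D|`. -/
theorem small_leading_coefficient_not_identity (D : ℤ) (hD : D < 0) (a b c : ℤ)
    (hdisc : b ^ 2 - a * c = D) (α β γ δ ε : ℤ)
    (hdet : α * δ - β * γ = 1 ∨ α * δ - β * γ = -1) (hε : ε = 1 ∨ ε = -1)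
    (hid : ∀ x y : ℤ, x ^ 2 - D * y ^ 2 =
      ε * (a * (α * x + β * y) ^ 2 + 2 * b * (α * x + β * y) * (γ * x + δ * y) +
        c * (γ * x + δ * y) ^ 2)) :
    |a| = 1 ∨ -D ≤ |a| :=
  small_leading_coefficient_not_identity_general D hD a b c α β γ δ ε hdet hε hid
end

section
/- Let f ∈ ℤ[X] be a monic polynomial of odd degree, let A, B, C ∈ ℤ[X] and let e be a positive integer with B² − AC = e²f. If there exists an integer n with gcd(A(n), e) = 1, then cont(A) = 1, i.e. the gcd of the coefficients of A is 1. (Indeed, if a prime p divided cont(A), then p would not divide e, and B² ≡ e²f (mod p) would force the reduction of f modulo p to be a square in 𝔽_p[X], contradicting that it is monic of odd degree.) -/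
open Polynomial

/-!
If a prime `p` divided `cont(A)`, it would divide `A(n)` and hence not `e`. Reducing
`B² - AC = e²f` modulo `p` kills `A` and leaves `B̄² = ē² f̄` with `ē ≠ 0`; since `f̄` is still
monic, its degree would be twice that of `B̄`, contradicting that it is odd.
-/

theorem Polynomial.even_natDegree_of_sq_eq_C_mul {R : Type*} [CommRing R]
    [NoZeroDivisors R] {g b : R[X]} {c : R} (hc : c ≠ 0)
    (h : b ^ 2 = C c * g) : Even g.natDegree := by
  have : (C c * g).natDegree = g.natDegree := natDegree_C_mul hc
  rw [← this, ← h, natDegree_pow]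
  exact even_two_mul _

theorem Polynomial.content_dvd_eval {R : Type*} [CommRing R] [IsDomain R]
    [NormalizedGCDMonoid R] (p : R[X]) (x : R) : p.content ∣ p.eval x := by
  simpa using eval_dvd (x := x) p.C_content_dvd

theorem Polynomial.content_eq_one_of_forall_prime_not_dvd {p : ℤ[X]}
    (h : ∀ q : ℕ, q.Prime → ¬ (q : ℤ) ∣ p.content) : p.content = 1 := by
  have hnonneg : 0 ≤ p.content := Int.nonneg_of_normalize_eq_self p.normalize_content
  by_contra hne
  obtain ⟨q, hq, hqp⟩ := Nat.exists_prime_and_dvd (n := p.content.natAbs) (by omega)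
  exact h q hq (Int.natCast_dvd.mpr hqp)

theorem Polynomial.map_intCast_zmod_eq_zero_of_dvd_content {p : ℤ[X]} {q : ℕ}
    (h : (q : ℤ) ∣ p.content) : p.map (Int.castRingHom (ZMod q)) = 0 := by
  ext k
  simpa [ZMod.intCast_zmod_eq_zero_iff_dvd] using h.trans (p.content_dvd_coeff k)

theorem not_dvd_content_of_sq_sub_mul_eq_C_mul {f A B C : ℤ[X]} (hmonic : f.Monic)
    (hodd : Odd f.natDegree) {e : ℤ} (hABC : B ^ 2 - A * C = Polynomial.C (e ^ 2) * f)
    {p : ℕ} [Fact p.Prime] (hpe : ¬ (p : ℤ) ∣ e) : ¬ (p : ℤ) ∣ A.content := by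
  intro hpA
  set φ := Int.castRingHom (ZMod p)
  have hsq : (B.map φ) ^ 2 = Polynomial.C (φ e ^ 2) * f.map φ := by
    simpa [map_intCast_zmod_eq_zero_of_dvd_content hpA, φ] using congrArg (map φ) hABC
  have he : φ e ^ 2 ≠ 0 := by
    simpa [φ, ZMod.intCast_zmod_eq_zero_iff_dvd] using hpe
  have heven := even_natDegree_of_sq_eq_C_mul he hsq
  rw [hmonic.natDegree_map] at heven
  exact Nat.not_even_iff_odd.mpr hodd heven

theorem content_eq_one_of_coprime_eval_general (f A B C : ℤ[X]) (hmonic : f.Monic)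
    (hodd : Odd f.natDegree) (e : ℤ)
    (hABC : B ^ 2 - A * C = Polynomial.C (e ^ 2) * f)
    (n : ℤ) (hcop : Int.gcd (A.eval n) e = 1) :
    A.content = 1 := by
  have hcoprime : IsCoprime A.content e :=
    (Int.isCoprime_iff_gcd_eq_one.mpr hcop).of_isCoprime_of_dvd_left (A.content_dvd_eval n)
  refine content_eq_one_of_forall_prime_not_dvd fun p hp hpA => ?_
  have := Fact.mk hp
  have hpe : ¬ (p : ℤ) ∣ e := fun hpe =>
    (Nat.prime_iff_prime_int.mp hp).not_isUnit (hcoprime.isUnit_of_dvd' hpA hpe)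
  exact not_dvd_content_of_sq_sub_mul_eq_C_mul hmonic hodd hABC hpe hpA

/-- Let `f ∈ ℤ[X]` be monic of odd degree, `A, B, C ∈ ℤ[X]` and `e` a
positive integer with `B² - AC = e²f`.  If `gcd(A(n), e) = 1` for some integer `n`, then
`cont(A) = 1`. -/
theorem content_eq_one_of_coprime_eval (f A B C : ℤ[X]) (hmonic : f.Monic)
    (hodd : Odd f.natDegree) (e : ℤ) (he : 0 < e)
    (hABC : B ^ 2 - A * C = Polynomial.C (e ^ 2) * f)
    (n : ℤ) (hcop : Int.gcd (A.eval n) e = 1) :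
    A.content = 1 :=
  content_eq_one_of_coprime_eval_general f A B C hmonic hodd e hABC n hcop
end
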